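/- arXiv:2107.08875 — 2 statements merged into one kernel-verified Lean document; each statement's English description precedes it below -/
import Mathlib

section
/- For every i with 1 ≤ i ≤ N, the set Vᵢ := Oᵢ⁻ ∩ O_{N−i+1}⁺ is unrevisited for φ¹: for all m ∈ ℕ and all x ∈ M, if x ∈ Vᵢ and φᵐ(x) ∈ Vᵢ then φᵏ(x) ∈ Vᵢ for all 0 ≤ k ≤ m. -/
/-! `φ⁻¹`-invariance of `Oᵢ⁻` says its complement is forward invariant, so once an orbit leaves
`Oᵢ⁻` it never returns; and `O⁺_{N-i+1}` is forward invariant, so an orbit never leaves it.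
An orbit segment starting and ending in the intersection therefore stays in both sets. -/

open Set Function

section

variable {α : Type*}

def IsUnrevisited (f : α → α) (s : Set α) : Prop :=
  ∀ (m : ℕ) (x : α), x ∈ s → f^[m] x ∈ s → ∀ k ≤ m, f^[k] x ∈ s

theorem iterate_mem_of_mapsTo_compl {f : α → α} {s : Set α} (h : MapsTo f sᶜ sᶜ) {x : α}
    {k m : ℕ} (hkm : k ≤ m) (hm : f^[m] x ∈ s) : f^[k] x ∈ s := by
  by_contra hk
  apply (h.iterate (m - k) hk)
  rwa [← iterate_add_apply, Nat.sub_add_cancel hkm]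

theorem isUnrevisited_inter {f : α → α} {s t : Set α} (hs : MapsTo f sᶜ sᶜ)
    (ht : MapsTo f t t) : IsUnrevisited f (s ∩ t) :=
  fun _ _ hx hm k hkm => ⟨iterate_mem_of_mapsTo_compl hs hkm hm.1, ht.iterate k hx.2⟩

theorem Homeomorph.mapsTo_compl_of_image_symm_subset {X : Type*} [TopologicalSpace X]
    (e : X ≃ₜ X) {s : Set X} (h : e.symm '' s ⊆ s) : MapsTo e sᶜ sᶜ := by
  rw [e.image_symm] at h
  exact compl_subset_compl.mpr h

end

theorem unrevisited_of_filtration_general {M : Type*} [TopologicalSpace M] (φ : M ≃ₜ M) (N : ℕ)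
    (O : ℕ → Set M)
    (hstab : ∀ i ≤ N, φ.symm '' O i ⊆ O i)
    (hstab' : ∀ i ≤ N, φ '' interior (O (N - i))ᶜ ⊆ interior (O (N - i))ᶜ)
    (i : ℕ) (hi1 : 1 ≤ i) (hiN : i ≤ N) :
    ∀ (m : ℕ) (x : M),
      x ∈ O i ∩ interior (O (N - (N - i + 1)))ᶜ →
      (⇑φ)^[m] x ∈ O i ∩ interior (O (N - (N - i + 1)))ᶜ →
      ∀ k ≤ m, (⇑φ)^[k] x ∈ O i ∩ interior (O (N - (N - i + 1)))ᶜ :=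
  isUnrevisited_inter (φ.mapsTo_compl_of_image_symm_subset (hstab i hiN))
    (mapsTo_iff_image_subset.mpr (hstab' (N - i + 1) (by omega)))

/-- For a filtration `(O i)` for `φ⁻¹` with associated filtration
`O⁺ j := interior ((O (N - j))ᶜ)` for `φ`, the set `V i := O i ∩ O⁺ (N - i + 1)`
is unrevisited for `φ`: if `x ∈ V i` and `φ^[m] x ∈ V i`, then `φ^[k] x ∈ V i`
for all `0 ≤ k ≤ m`. -/
theorem unrevisited_of_filtration {M : Type*} [TopologicalSpace M] (φ : M ≃ₜ M) (N : ℕ)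
    (O : ℕ → Set M)
    (hopen : ∀ i ≤ N, IsOpen (O i))
    (hstab : ∀ i ≤ N, φ.symm '' O i ⊆ O i)
    (hstab' : ∀ i ≤ N, φ '' interior (O (N - i))ᶜ ⊆ interior (O (N - i))ᶜ)
    (i : ℕ) (hi1 : 1 ≤ i) (hiN : i ≤ N) :
    ∀ (m : ℕ) (x : M),
      x ∈ O i ∩ interior (O (N - (N - i + 1)))ᶜ →
      (⇑φ)^[m] x ∈ O i ∩ interior (O (N - (N - i + 1)))ᶜ →
      ∀ k ≤ m, (⇑φ)^[k] x ∈ O i ∩ interior (O (N - (N - i + 1)))ᶜ :=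
  unrevisited_of_filtration_general φ N O hstab hstab' i hi1 hiN
end

section
/- Let V be an unrevisited neighborhood of a compact invariant set K with closure(V) ∩ Ω = K, where Ω is the nonwandering set. Then the decreasing sequence of sets V ∩ φᵐ(V) converges uniformly to Wᵘ(K) ∩ closure(V) as m → +∞, in the sense that sup_{y ∈ V ∩ φᵐ(V)} d(y, Wᵘ(K) ∩ closure(V)) → 0 as m → +∞. -/
open Filter Metric Set Topology

/-! Unrevisitedness means that a point of `V ∩ φᵐ(V)` has its last `m` backward integer
iterates in `V`. Hence an accumulation point `z` of such points, as `m → ∞`, has its whole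
backward integer orbit in `closure V`. If `z ∈ Wᵘ(Kⱼ)`, an α-limit point of `z` lies in
`closure V ∩ Kⱼ ⊆ closure V ∩ Ω = K`; since each basic set lies in its own unstable set and
these are pairwise disjoint, `Kⱼ = K`. Compactness of `M` makes the convergence uniform. -/

def Unrevisited {α : Type*} (f : α → α) (V : Set α) : Prop :=
  ∀ (m : ℕ) (x : α), x ∈ V → f^[m] x ∈ V → ∀ k ≤ m, f^[k] x ∈ V

theorem exists_forall_infDist_lt_of_iInter_closure_subset {M : Type*} [MetricSpace M]
    [CompactSpace M] {A : ℕ → Set M} {S : Set M} (h : ⋂ n, closure (⋃ m ≥ n, A m) ⊆ S)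
    {ε : ℝ} (hε : 0 < ε) : ∃ m₀, ∀ m ≥ m₀, ∀ y ∈ A m, infDist y S < ε := by
  obtain ⟨U, hUo, hSU, hU⟩ : ∃ U : Set M, IsOpen U ∧ S ⊆ U ∧ ∀ y ∈ U, infDist y S < ε :=
    ⟨_, isOpen_lt (continuous_infDist_pt S) continuous_const,
      fun y hy => by simp [infDist_zero_of_mem hy, hε], fun _ hy => hy⟩
  have hclosed : ∀ n, IsClosed (closure (⋃ m ≥ n, A m) \ U) := fun n =>
    isClosed_closure.sdiff hUo
  have hanti : ∀ n, closure (⋃ m ≥ n + 1, A m) \ U ⊆ closure (⋃ m ≥ n, A m) \ U := fun n =>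
    Set.sdiff_subset_sdiff_left <| closure_mono <|
      iUnion₂_mono' fun m hm => ⟨m, by omega, subset_rfl⟩
  obtain ⟨n, hn⟩ : ∃ n, closure (⋃ m ≥ n, A m) \ U = ∅ := by
    by_contra! hne
    obtain ⟨y, hy⟩ := IsCompact.nonempty_iInter_of_sequence_nonempty_isCompact_isClosed _
      hanti hne (hclosed 0).isCompact hclosed
    have hyn := mem_iInter.1 hy
    exact (hyn 0).2 (hSU (h (mem_iInter.2 fun i => (hyn i).1)))
  refine ⟨n, fun m hm y hy => hU y ?_⟩
  by_contra hyU
  exact (eq_empty_iff_forall_notMem.1 hn) y ⟨subset_closure (mem_iUnion₂.2 ⟨m, hm, hy⟩), hyU⟩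

namespace Flow

variable {τ α : Type*} [TopologicalSpace τ] [TopologicalSpace α]

theorem iterate_apply [AddMonoid τ] (ϕ : Flow τ α) (t : τ) (n : ℕ) (x : α) :
    (ϕ t)^[n] x = ϕ (n • t) x := by
  induction n with
  | zero => simp [map_zero_apply]
  | succ n ih => rw [Function.iterate_succ_apply', ih, succ_nsmul', map_add]

variable {M : Type*} [MetricSpace M] (ϕ : Flow ℝ M) {K L V : Set M}

def unstableSet (K : Set M) : Set M :=
  {x | Tendsto (fun t => infDist (ϕ (-t) x) K) atTop (𝓝 0)}

-- junk value: `infDist x ∅ = 0`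
theorem unstableSet_empty : ϕ.unstableSet ∅ = univ := by
  ext x
  simp [unstableSet, infDist_empty]

theorem subset_unstableSet (hK : IsInvariant ϕ K) : K ⊆ ϕ.unstableSet K := fun x hx => by
  have h : ∀ t, infDist (ϕ (-t) x) K = 0 := fun t => infDist_zero_of_mem (hK (-t) hx)
  simp [unstableSet, h]

theorem nonempty_of_disjoint_unstableSet [Nonempty M] (hK : IsInvariant ϕ K)
    (h : Disjoint (ϕ.unstableSet K) (ϕ.unstableSet L)) : L.Nonempty := by
  rw [nonempty_iff_ne_empty]
  rintro rfl
  rw [unstableSet_empty, disjoint_univ] at h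
  rcases K.eq_empty_or_nonempty with rfl | ⟨x, hx⟩
  · simp [unstableSet_empty] at h
  · exact h.subset (ϕ.subset_unstableSet hK hx)

theorem inter_nonempty_of_mem_unstableSet (hL : IsClosed L) (hLne : L.Nonempty) {C : Set M}
    (hC : IsCompact C) {x : M} (hx : x ∈ ϕ.unstableSet L)
    (horbit : ∀ k : ℕ, ϕ (-(k : ℝ)) x ∈ C) : (C ∩ L).Nonempty := by
  obtain ⟨z, hzC, σ, hσ, hz⟩ := hC.tendsto_subseq horbit
  refine ⟨z, hzC, (hL.mem_iff_infDist_zero hLne).2 ?_⟩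
  have hσ' : Tendsto (fun k => ((σ k : ℕ) : ℝ)) atTop atTop :=
    tendsto_natCast_atTop_atTop.comp hσ.tendsto_atTop
  exact tendsto_nhds_unique (((continuous_infDist_pt L).tendsto z).comp hz) (hx.comp hσ')

theorem _root_.Unrevisited.flow_neg_mem (hV : Unrevisited (ϕ 1) V) {m k : ℕ} {y : M}
    (hy : y ∈ V ∩ (ϕ 1)^[m] '' V) (hk : k ≤ m) : ϕ (-(k : ℝ)) y ∈ V := by
  obtain ⟨hyV, x, hxV, rfl⟩ := hy
  have hback : ϕ (-(k : ℝ)) ((ϕ 1)^[m] x) = (ϕ 1)^[m - k] x := by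
    rw [iterate_apply, iterate_apply, ← map_add]
    congr 1
    rw [nsmul_one, nsmul_one, Nat.cast_sub hk]
    ring
  exact hback ▸ hV m x hxV hyV (m - k) (Nat.sub_le m k)

theorem _root_.Unrevisited.flow_neg_mem_closure (hV : Unrevisited (ϕ 1) V) {z : M}
    (hz : z ∈ ⋂ n, closure (⋃ m ≥ n, V ∩ (ϕ 1)^[m] '' V)) (k : ℕ) :
    ϕ (-(k : ℝ)) z ∈ closure V :=
  map_mem_closure (ϕ.continuous_toFun _) (mem_iInter.1 hz k) fun _ hy =>
    let ⟨_, hm, hy⟩ := mem_iUnion₂.1 hy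
    hV.flow_neg_mem ϕ hy hm

end Flow

theorem unrevisited_uniform_convergence_general {M : Type*} [MetricSpace M] [CompactSpace M]
    (φ : ℝ → M → M)
    (hφ0 : ∀ x, φ 0 x = x)
    (hφadd : ∀ s t x, φ (s + t) x = φ s (φ t x))
    (hφcont : Continuous fun p : ℝ × M => φ p.1 p.2)
    (N : ℕ) (K : ℕ → Set M)
    (hKcpt : ∀ i, 1 ≤ i → i ≤ N → IsCompact (K i))
    (hKinv : ∀ i, 1 ≤ i → i ≤ N → ∀ t, φ t '' K i = K i)
    -- the unstable sets of the basic sets partition `M`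
    (hpart : ∀ x : M, ∃ i, 1 ≤ i ∧ i ≤ N ∧
      Tendsto (fun t : ℝ => infDist (φ (-t) x) (K i)) atTop (nhds 0))
    (hdisj : ∀ i j, 1 ≤ i → i ≤ N → 1 ≤ j → j ≤ N → i ≠ j →
      Disjoint {x : M | Tendsto (fun t : ℝ => infDist (φ (-t) x) (K i)) atTop (nhds 0)}
               {x : M | Tendsto (fun t : ℝ => infDist (φ (-t) x) (K j)) atTop (nhds 0)})
    (i₀ : ℕ) (hi₀1 : 1 ≤ i₀) (hi₀N : i₀ ≤ N)
    (V : Set M)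
    -- `V` is unrevisited for the time-one map
    (hunrev : ∀ (m : ℕ) (x : M), x ∈ V → (fun z => φ 1 z)^[m] x ∈ V →
      ∀ k ≤ m, (fun z => φ 1 z)^[k] x ∈ V)
    -- `closure V` meets the nonwandering set `Ω = ⋃ Kᵢ` exactly in `K i₀`
    (hclos : closure V ∩ (⋃ (i : ℕ) (_ : 1 ≤ i ∧ i ≤ N), K i) = K i₀) :
    ∀ ε > 0, ∃ m₀ : ℕ, ∀ m ≥ m₀,
      ∀ y ∈ V ∩ (fun z => φ 1 z)^[m] '' V,
        infDist y
          ({x : M | Tendsto (fun t : ℝ => infDist (φ (-t) x) (K i₀)) atTop (nhds 0)}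
            ∩ closure V) < ε := by
  let ϕ : Flow ℝ M := ⟨φ, hφcont, hφadd, hφ0⟩
  have hinv : ∀ i, 1 ≤ i → i ≤ N → IsInvariant ϕ (K i) := fun i h1 hN =>
    (Flow.isInvariant_iff_image_eq ϕ (K i)).2 (hKinv i h1 hN)
  intro ε hε
  refine exists_forall_infDist_lt_of_iInter_closure_subset (fun z hz => ?_) hε
  have horbit := Unrevisited.flow_neg_mem_closure ϕ hunrev hz
  refine ⟨?_, by simpa using horbit 0⟩
  obtain ⟨j, hj1, hjN, hzj⟩ := hpart z
  obtain rfl : j = i₀ := by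
    by_contra hji
    have hW : Disjoint (ϕ.unstableSet (K i₀)) (ϕ.unstableSet (K j)) :=
      hdisj i₀ j hi₀1 hi₀N hj1 hjN (Ne.symm hji)
    have : Nonempty M := ⟨z⟩
    obtain ⟨w, hwV, hwK⟩ := ϕ.inter_nonempty_of_mem_unstableSet (hKcpt j hj1 hjN).isClosed
      (ϕ.nonempty_of_disjoint_unstableSet (hinv i₀ hi₀1 hi₀N) hW) isClosed_closure.isCompact hzj
      horbit
    have hwK₀ : w ∈ K i₀ := by
      rw [← hclos]
      exact ⟨hwV, mem_iUnion₂.2 ⟨j, ⟨hj1, hjN⟩, hwK⟩⟩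
    exact disjoint_left.1 hW (ϕ.subset_unstableSet (hinv i₀ hi₀1 hi₀N) hwK₀)
      (ϕ.subset_unstableSet (hinv j hj1 hjN) hwK)
  exact hzj

/-- Uniform convergence of unrevisited neighborhoods: if `V` is an unrevisited
neighborhood of the basic set `K i₀` with `closure V ∩ Ω = K i₀`, then the
decreasing sequence `V ∩ φᵐ(V)` converges uniformly to `Wᵘ(K i₀) ∩ closure V`. -/
theorem unrevisited_uniform_convergence {M : Type*} [MetricSpace M] [CompactSpace M]
    (φ : ℝ → M → M)
    (hφ0 : ∀ x, φ 0 x = x)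
    (hφadd : ∀ s t x, φ (s + t) x = φ s (φ t x))
    (hφcont : Continuous fun p : ℝ × M => φ p.1 p.2)
    (N : ℕ) (K : ℕ → Set M)
    (hKcpt : ∀ i, 1 ≤ i → i ≤ N → IsCompact (K i))
    (hKinv : ∀ i, 1 ≤ i → i ≤ N → ∀ t, φ t '' K i = K i)
    -- the unstable sets of the basic sets partition `M`
    (hpart : ∀ x : M, ∃ i, 1 ≤ i ∧ i ≤ N ∧
      Tendsto (fun t : ℝ => infDist (φ (-t) x) (K i)) atTop (nhds 0))
    (hdisj : ∀ i j, 1 ≤ i → i ≤ N → 1 ≤ j → j ≤ N → i ≠ j →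
      Disjoint {x : M | Tendsto (fun t : ℝ => infDist (φ (-t) x) (K i)) atTop (nhds 0)}
               {x : M | Tendsto (fun t : ℝ => infDist (φ (-t) x) (K j)) atTop (nhds 0)})
    (i₀ : ℕ) (hi₀1 : 1 ≤ i₀) (hi₀N : i₀ ≤ N)
    (V : Set M) (hVopen : IsOpen V) (hKV : K i₀ ⊆ V)
    -- `V` is unrevisited for the time-one map
    (hunrev : ∀ (m : ℕ) (x : M), x ∈ V → (fun z => φ 1 z)^[m] x ∈ V →
      ∀ k ≤ m, (fun z => φ 1 z)^[k] x ∈ V)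
    -- `closure V` meets the nonwandering set `Ω = ⋃ Kᵢ` exactly in `K i₀`
    (hclos : closure V ∩ (⋃ (i : ℕ) (_ : 1 ≤ i ∧ i ≤ N), K i) = K i₀) :
    ∀ ε > 0, ∃ m₀ : ℕ, ∀ m ≥ m₀,
      ∀ y ∈ V ∩ (fun z => φ 1 z)^[m] '' V,
        infDist y
          ({x : M | Tendsto (fun t : ℝ => infDist (φ (-t) x) (K i₀)) atTop (nhds 0)}
            ∩ closure V) < ε :=
  unrevisited_uniform_convergence_general φ hφ0 hφadd hφcont N K hKcpt hKinv hpart hdisj i₀ hi₀1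
    hi₀N V hunrev hclos
end
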